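/- arXiv:2105.14299 — 3 statements merged into one kernel-verified Lean document; each statement's English description precedes it below -/
import Mathlib

section
/- (Theorem 2.4, upper bound in (2.5)) Let (μ, φ) be an eigenpair of A_s with ‖φ‖ = 1. Then the distance from μ to the spectrum of the shifted operator A + i s · 1 is at most s · ‖φ − P φ‖, i.e. Metric.infDist μ ((fun z => z + s * Complex.I) '' spectrum ℂ A) ≤ s · δ(φ). (The shifted operator A + i s · 1 is automatically normal since A is self-adjoint, which is what the proof's resolvent-norm identity requires.) -/
/-!
For `λ := μ - i s`, the eigen-equation gives the residual `A φ - λ φ = i s (φ - P φ)`. Since `A` is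
normal, the norm of the resolvent `(λ - A)⁻¹` equals its spectral radius, which is
`1 / dist(λ, σ(A))`; hence `dist(λ, σ(A)) ≤ ‖A φ - λ φ‖ = s ‖φ - P φ‖`, and shifting by `i s`
turns `dist(λ, σ(A))` into `dist(μ, σ(A) + i s)`.
-/

open Metric

section CStarAlgebra

variable {A : Type*} [CStarAlgebra A]

lemma IsStarNormal.algebraMap_sub (c : ℂ) (a : A) [IsStarNormal a] :
    IsStarNormal (algebraMap ℂ A c - a) := by
  have : IsStarNormal (algebraMap ℂ A c) := by
    rw [Algebra.algebraMap_eq_smul_one]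
    infer_instance
  exact (Algebra.commute_algebraMap_left c (star a)).isStarNormal_sub

lemma IsStarNormal.norm_inv_le {u : Aˣ} [IsStarNormal (u : A)] {d : ℝ} (hd : 0 < d)
    (h : ∀ z ∈ spectrum ℂ (u : A), d ≤ ‖z‖) : ‖(↑u⁻¹ : A)‖ ≤ d⁻¹ := by
  have hρ : spectralRadius ℂ (↑u⁻¹ : A) ≤ ENNReal.ofReal d⁻¹ := by
    refine iSup₂_le fun w hw => ?_
    rw [← spectrum.map_inv] at hw
    have hd_le : d ≤ ‖w⁻¹‖ := h _ (Set.mem_inv.mp hw)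
    rw [norm_inv] at hd_le
    have hw0 : 0 < ‖w‖ := inv_pos.mp (hd.trans_le hd_le)
    calc (‖w‖₊ : ENNReal) = ENNReal.ofReal ‖w‖ := (ofReal_norm w).symm
      _ ≤ ENNReal.ofReal d⁻¹ := ENNReal.ofReal_le_ofReal ((le_inv_comm₀ hd hw0).mp hd_le)
  rw [IsStarNormal.spectralRadius_eq_nnnorm] at hρ
  simpa [ENNReal.toReal_ofReal (inv_nonneg.mpr hd.le)] using
    ENNReal.toReal_mono ENNReal.ofReal_ne_top hρ

end CStarAlgebra

theorem ContinuousLinearMap.infDist_spectrum_mul_norm_le {E : Type*} [NormedAddCommGroup E]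
    [InnerProductSpace ℂ E] [CompleteSpace E] (T : E →L[ℂ] E) [IsStarNormal T] (c : ℂ) (x : E) :
    infDist c (spectrum ℂ T) * ‖x‖ ≤ ‖T x - c • x‖ := by
  obtain hd | hd := (infDist_nonneg (x := c) (s := spectrum ℂ T)).eq_or_lt
  · rw [← hd, zero_mul]
    exact norm_nonneg _
  set d := infDist c (spectrum ℂ T)
  have hc : c ∉ spectrum ℂ T := fun hc => hd.ne' (infDist_zero_of_mem hc)
  set u := (spectrum.notMem_iff.mp hc).unit
  have hu : (u : E →L[ℂ] E) = algebraMap ℂ _ c - T := IsUnit.unit_spec _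
  have : IsStarNormal (u : E →L[ℂ] E) := hu ▸ IsStarNormal.algebraMap_sub c T
  have hspec : ∀ z ∈ spectrum ℂ (u : E →L[ℂ] E), d ≤ ‖z‖ := by
    intro z hz
    rw [hu, ← spectrum.singleton_sub_eq] at hz
    obtain ⟨_, hc', y, hy, rfl⟩ := hz
    rw [Set.mem_singleton_iff.mp hc']
    simpa [dist_eq_norm] using infDist_le_dist_of_mem (x := c) hy
  have hux : (u : E →L[ℂ] E) x = -(T x - c • x) := by
    simp [hu, Algebra.algebraMap_eq_smul_one]
  calc d * ‖x‖ ≤ d * (‖(↑u⁻¹ : E →L[ℂ] E)‖ * ‖(u : E →L[ℂ] E) x‖) := by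
        gcongr
        calc ‖x‖ = ‖(↑u⁻¹ : E →L[ℂ] E) ((u : E →L[ℂ] E) x)‖ := by
              rw [← mul_apply_eq_comp, Units.inv_mul, one_apply_eq_self]
          _ ≤ _ := (↑u⁻¹ : E →L[ℂ] E).le_opNorm _
    _ ≤ d * (d⁻¹ * ‖(u : E →L[ℂ] E) x‖) := by
        gcongr
        exact IsStarNormal.norm_inv_le hd hspec
    _ = ‖T x - c • x‖ := by
        rw [hux, norm_neg, ← mul_assoc, mul_inv_cancel₀ hd.ne', one_mul]

theorem stmt8_general {H : Type*} [NormedAddCommGroup H] [InnerProductSpace ℂ H] [CompleteSpace H]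
    (A P : H →L[ℂ] H) (hA : IsSelfAdjoint A)
    (s : ℝ) (hs : 0 < s) (μ : ℂ) (φ : H) (hφ : ‖φ‖ = 1)
    (heig : A φ + (s * Complex.I) • P φ = μ • φ) :
    Metric.infDist μ ((fun z : ℂ => z + s * Complex.I) '' spectrum ℂ A)
      ≤ s * ‖φ - P φ‖ := by
  have : IsStarNormal A := hA.isStarNormal
  have hresidual : A φ - (μ - s * Complex.I) • φ = (s * Complex.I) • (φ - P φ) := by
    rw [sub_smul, ← heig]
    module
  calc infDist μ ((· + s * Complex.I) '' spectrum ℂ A)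
      = infDist (μ - s * Complex.I) (spectrum ℂ A) := by
        simpa using infDist_image (isometry_add_right (s * Complex.I))
          (x := μ - s * Complex.I) (t := spectrum ℂ A)
    _ ≤ ‖A φ - (μ - s * Complex.I) • φ‖ := by
        simpa [hφ] using A.infDist_spectrum_mul_norm_le (μ - s * Complex.I) φ
    _ = s * ‖φ - P φ‖ := by
        rw [hresidual, norm_smul, norm_mul, Complex.norm_real, Complex.norm_I, mul_one,
          Real.norm_of_nonneg hs.le]

/-- Theorem 2.4, upper bound in (2.5): for an eigenpair `(μ, φ)` of `A_s` with `‖φ‖ = 1`,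
`dist(μ, Spec(A + i s)) ≤ s ‖φ - P φ‖ = s δ(φ)`. -/
theorem stmt8 {H : Type*} [NormedAddCommGroup H] [InnerProductSpace ℂ H] [CompleteSpace H]
    (A P : H →L[ℂ] H) (hA : IsSelfAdjoint A) (hP : IsSelfAdjoint P) (hP2 : P ∘L P = P)
    (s : ℝ) (hs : 0 < s) (μ : ℂ) (φ : H) (hφ : ‖φ‖ = 1)
    (heig : A φ + (s * Complex.I) • P φ = μ • φ) :
    Metric.infDist μ ((fun z : ℂ => z + s * Complex.I) '' spectrum ℂ A)
      ≤ s * ‖φ - P φ‖ :=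
  stmt8_general A P hA s hs μ φ hφ heig
end

section
/- (Proposition 2.6, residual bound (2.8)) Let C : H → H be a conjugation: an additive, conjugate-linear map (C (c • x) = (conj c) • C x) with C (C x) = x and ‖C x‖ = ‖x‖ for all x, which commutes with A and with P (C (A x) = A (C x) and C (P x) = P (C x)). Let (μ, φ) be an eigenpair of A_s with ‖φ‖ = 1, and define the real and imaginary parts φ₁ = (1/2 : ℂ) • (φ + C φ) and φ₂ = (−Complex.I/2) • (φ − C φ). Write τ = ‖P φ‖ and δ = ‖φ − P φ‖. Then ‖A φ₁ − (Re μ : ℂ) • φ₁‖² = s² · (τ⁴ · ‖φ₂ − P φ₂‖² + δ⁴ · ‖P φ₂‖²). -/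
/-!
Pairing the eigen-equation with `φ` gives `Im μ = s τ²`, since `⟪φ, A φ⟫` is real and
`⟪φ, P φ⟫ = τ²`. Applying `C` gives the conjugate equation for `C φ`; averaging the two yields
`A φ₁ - Re μ φ₁ = s P φ₂ - Im μ φ₂ = s δ² P φ₂ - s τ² (φ₂ - P φ₂)`, using `δ² = 1 - τ²`.
The two summands are orthogonal, so Pythagoras gives the identity.
-/

open scoped InnerProductSpace ComplexConjugate

namespace LinearMap.IsSymmetricProjection

variable {𝕜 E : Type*} [RCLike 𝕜] [NormedAddCommGroup E] [InnerProductSpace 𝕜 E]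
  {P : E →ₗ[𝕜] E}

theorem inner_apply_sub_apply_eq_zero (hP : P.IsSymmetricProjection) (x y : E) :
    ⟪P x, y - P y⟫_𝕜 = 0 := by
  have hPP : P (P y) = P y := congrArg (· y) hP.isIdempotentElem
  rw [hP.isSymmetric, map_sub, hPP, sub_self, inner_zero_right]

theorem inner_self_apply_eq_norm_sq (hP : P.IsSymmetricProjection) (x : E) :
    ⟪x, P x⟫_𝕜 = (‖P x‖ ^ 2 : 𝕜) := by
  rw [← inner_self_eq_norm_sq_to_K, ← sub_eq_zero, ← inner_sub_left, ← inner_conj_symm,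
    hP.inner_apply_sub_apply_eq_zero, map_zero]

theorem norm_smul_apply_add_smul_sub_apply_sq (hP : P.IsSymmetricProjection) (a b : 𝕜) (x : E) :
    ‖a • P x + b • (x - P x)‖ ^ 2 = ‖a‖ ^ 2 * ‖P x‖ ^ 2 + ‖b‖ ^ 2 * ‖x - P x‖ ^ 2 := by
  have horth : ⟪a • P x, b • (x - P x)⟫_𝕜 = 0 := by
    rw [inner_smul_left, inner_smul_right, hP.inner_apply_sub_apply_eq_zero, mul_zero, mul_zero]
  rw [sq, sq, sq, sq, sq, norm_add_sq_eq_norm_sq_add_norm_sq_of_inner_eq_zero _ _ horth,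
    norm_smul, norm_smul]
  ring

theorem norm_sub_apply_sq (hP : P.IsSymmetricProjection) (x : E) :
    ‖x - P x‖ ^ 2 = ‖x‖ ^ 2 - ‖P x‖ ^ 2 := by
  have h := hP.norm_smul_apply_add_smul_sub_apply_sq 1 1 x
  rw [one_smul, one_smul, add_sub_cancel, norm_one] at h
  linarith

end LinearMap.IsSymmetricProjection

theorem im_mul_norm_sq_of_apply_add_smul_apply_eq_smul {H : Type*} [NormedAddCommGroup H]
    [InnerProductSpace ℂ H] {A P : H →ₗ[ℂ] H} (hA : A.IsSymmetric)
    (hP : P.IsSymmetricProjection) {s : ℝ} {μ : ℂ} {φ : H}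
    (heig : A φ + (s * Complex.I) • P φ = μ • φ) :
    μ.im * ‖φ‖ ^ 2 = s * ‖P φ‖ ^ 2 := by
  have hreal : (⟪φ, A φ⟫_ℂ).im = 0 := hA.im_inner_self_apply φ
  have h := congrArg (fun y => (⟪φ, y⟫_ℂ).im) heig
  simp only [inner_add_right, inner_smul_right, hP.inner_self_apply_eq_norm_sq,
    inner_self_eq_norm_sq_to_K] at h
  simpa [← Complex.ofReal_pow, hreal] using h.symm

theorem apply_conj_add_smul_apply_conj {M : Type*} [AddCommGroup M] [Module ℂ M]
    {A P C : M → M} (hCadd : ∀ x y : M, C (x + y) = C x + C y)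
    (hCsmul : ∀ (c : ℂ) (x : M), C (c • x) = conj c • C x)
    (hCA : ∀ x : M, C (A x) = A (C x)) (hCP : ∀ x : M, C (P x) = P (C x)) {c μ : ℂ} {φ : M}
    (heig : A φ + c • P φ = μ • φ) :
    A (C φ) + conj c • P (C φ) = conj μ • C φ := by
  rw [← hCA, ← hCP, ← hCsmul, ← hCadd, heig, hCsmul]

theorem apply_realPart_sub_re_smul {M F : Type*} [AddCommGroup M] [Module ℂ M] [FunLike F M M]
    [LinearMapClass F ℂ M M] {A P : F} {s : ℝ} {μ : ℂ} {φ ψ : M}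
    (hφ : A φ + (s * Complex.I) • P φ = μ • φ)
    (hψ : A ψ - (s * Complex.I) • P ψ = conj μ • ψ) :
    A ((1 / 2 : ℂ) • (φ + ψ)) - (μ.re : ℂ) • (1 / 2 : ℂ) • (φ + ψ) =
      (s : ℂ) • P ((-Complex.I / 2) • (φ - ψ)) - (μ.im : ℂ) • (-Complex.I / 2) • (φ - ψ) := by
  have hAφ : A φ = (μ.re + μ.im * Complex.I) • φ - (s * Complex.I) • P φ := by
    rw [Complex.re_add_im]; exact eq_sub_of_add_eq hφ
  have hAψ : A ψ = (μ.re - μ.im * Complex.I) • ψ + (s * Complex.I) • P ψ := by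
    rw [show (μ.re - μ.im * Complex.I : ℂ) = conj μ from Complex.ext (by simp) (by simp)]
    exact eq_add_of_sub_eq hψ
  simp only [map_smul, map_add, map_sub, hAφ, hAψ]
  match_scalars <;> ring

theorem stmt12_general {H : Type*} [NormedAddCommGroup H] [InnerProductSpace ℂ H] [CompleteSpace H]
    (A P : H →L[ℂ] H) (hA : IsSelfAdjoint A) (hP : IsSelfAdjoint P) (hP2 : P ∘L P = P)
    (s : ℝ)
    (C : H → H)
    (hCadd : ∀ x y : H, C (x + y) = C x + C y)
    (hCsmul : ∀ (c : ℂ) (x : H), C (c • x) = (starRingEnd ℂ c) • C x)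
    (hCA : ∀ x : H, C (A x) = A (C x))
    (hCP : ∀ x : H, C (P x) = P (C x))
    (μ : ℂ) (φ : H) (hφ : ‖φ‖ = 1)
    (heig : A φ + (s * Complex.I) • P φ = μ • φ)
    (φ₁ φ₂ : H)
    (hφ₁ : φ₁ = (1 / 2 : ℂ) • (φ + C φ))
    (hφ₂ : φ₂ = (-Complex.I / 2) • (φ - C φ)) :
    ‖A φ₁ - (μ.re : ℂ) • φ₁‖ ^ 2 =
      s ^ 2 * (‖P φ‖ ^ 4 * ‖φ₂ - P φ₂‖ ^ 2 + ‖φ - P φ‖ ^ 4 * ‖P φ₂‖ ^ 2) := by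
  have hPproj : (P : H →ₗ[ℂ] H).IsSymmetricProjection :=
    ContinuousLinearMap.isStarProjection_iff_isSymmetricProjection.mp ⟨hP2, hP⟩
  have hconj : A (C φ) - (s * Complex.I) • P (C φ) = conj μ • C φ := by
    simpa [sub_eq_add_neg] using apply_conj_add_smul_apply_conj hCadd hCsmul hCA hCP heig
  have hres : A φ₁ - (μ.re : ℂ) • φ₁ =
      ((s - μ.im : ℝ) : ℂ) • P φ₂ + ((-μ.im : ℝ) : ℂ) • (φ₂ - P φ₂) := by
    rw [hφ₁, hφ₂, apply_realPart_sub_re_smul heig hconj]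
    push_cast
    module
  have him : μ.im = s * ‖P φ‖ ^ 2 := by
    simpa [hφ] using im_mul_norm_sq_of_apply_add_smul_apply_eq_smul hA.isSymmetric hPproj heig
  have hpyth := hPproj.norm_smul_apply_add_smul_sub_apply_sq ((s - μ.im : ℝ) : ℂ) (-μ.im : ℝ) φ₂
  have hδ := hPproj.norm_sub_apply_sq φ
  rw [ContinuousLinearMap.coe_coe] at hpyth hδ
  rw [hres, hpyth, Complex.norm_real, Complex.norm_real, Real.norm_eq_abs, Real.norm_eq_abs,
    sq_abs, sq_abs, him, show ‖φ - P φ‖ ^ 4 = (‖φ - P φ‖ ^ 2) ^ 2 by ring, hδ, hφ]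
  ring

/-- Proposition 2.6, residual bound (2.8): with a conjugation `C` commuting with `A`
and `P`, an eigenpair `(μ, φ)` of `A_s` with `‖φ‖ = 1`, and real/imaginary parts
`φ₁ = (φ + C φ)/2`, `φ₂ = -i(φ - C φ)/2`, one has
`‖A φ₁ - (Re μ) φ₁‖² = s² (τ⁴ ‖φ₂ - P φ₂‖² + δ⁴ ‖P φ₂‖²)`. -/
theorem stmt12 {H : Type*} [NormedAddCommGroup H] [InnerProductSpace ℂ H] [CompleteSpace H]
    (A P : H →L[ℂ] H) (hA : IsSelfAdjoint A) (hP : IsSelfAdjoint P) (hP2 : P ∘L P = P)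
    (s : ℝ) (hs : 0 < s)
    (C : H → H)
    (hCadd : ∀ x y : H, C (x + y) = C x + C y)
    (hCsmul : ∀ (c : ℂ) (x : H), C (c • x) = (starRingEnd ℂ c) • C x)
    (hCinv : ∀ x : H, C (C x) = x)
    (hCnorm : ∀ x : H, ‖C x‖ = ‖x‖)
    (hCA : ∀ x : H, C (A x) = A (C x))
    (hCP : ∀ x : H, C (P x) = P (C x))
    (μ : ℂ) (φ : H) (hφ : ‖φ‖ = 1)
    (heig : A φ + (s * Complex.I) • P φ = μ • φ)
    (φ₁ φ₂ : H)
    (hφ₁ : φ₁ = (1 / 2 : ℂ) • (φ + C φ))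
    (hφ₂ : φ₂ = (-Complex.I / 2) • (φ - C φ)) :
    ‖A φ₁ - (μ.re : ℂ) • φ₁‖ ^ 2 =
      s ^ 2 * (‖P φ‖ ^ 4 * ‖φ₂ - P φ₂‖ ^ 2 + ‖φ - P φ‖ ^ 4 * ‖P φ₂‖ ^ 2) :=
  stmt12_general A P hA hP hP2 s C hCadd hCsmul hCA hCP μ φ hφ heig φ₁ φ₂ hφ₁ hφ₂
end

section
/- (Remark 3.2, second estimate in (3.3)) Define the complementary shifted operator Ã_s by Ã_s x = A x + (s * Complex.I) • (x − P x), abstracting L̃_s = L + i s χ_{Ω∖R}. Let (μ, φ) be an eigenpair of Ã_s with ‖φ‖ = 1, and write δ = ‖φ − P φ‖, τ = ‖P φ‖. Then the distance from Re μ to the real spectrum of A satisfies Metric.infDist (Re μ) (spectrum ℝ A) ≤ s · δ · τ. -/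
/-!
Write `ψ = φ - P φ`, so `⟪φ, ψ⟫ = ‖ψ‖² = δ²` is real. Pairing the eigen-equation with `φ` gives
`μ = ⟪φ, A φ⟫ + i s δ²` with `⟪φ, A φ⟫` real, hence `(A - Re μ) φ = i s (δ² φ - ψ)`. Since `φ` is a
unit vector, `‖δ² φ - ψ‖² = ‖ψ‖² - |⟪φ, ψ⟫|² = δ² - δ⁴ = δ² τ²`. Finally, for self-adjoint `A` the
resolvent `(A - r)⁻¹`, obtained from the continuous functional calculus, has norm at most
`1 / dist(r, σ(A))`, so `dist(r, σ(A)) ≤ ‖(A - r) φ‖` for every unit vector `φ`.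
-/

open ContinuousLinearMap Complex Metric

section InnerProductSpace

variable {𝕜 E : Type*} [RCLike 𝕜] [NormedAddCommGroup E] [InnerProductSpace 𝕜 E]

local notation "⟪" x ", " y "⟫" => inner 𝕜 x y

theorem norm_inner_smul_sub_sq {u : E} (hu : ‖u‖ = 1) (v : E) :
    ‖⟪u, v⟫ • u - v‖ ^ 2 = ‖v‖ ^ 2 - ‖⟪u, v⟫‖ ^ 2 := by
  rw [@norm_sub_sq 𝕜, norm_smul, hu, mul_one, inner_smul_left, RCLike.conj_mul]
  norm_cast
  ring

namespace IsStarProjection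

variable [CompleteSpace E] {P : E →L[𝕜] E} (hP : IsStarProjection P) (x : E)
include hP

theorem inner_apply_sub_apply_eq_zero : ⟪P x, x - P x⟫ = 0 := by
  have hPP : P (P x) = P x := congr($(hP.isIdempotentElem) x)
  have hsymm := hP.isSelfAdjoint.isSymmetric (P x) x
  rw [coe_coe, hPP] at hsymm
  rw [inner_sub_right, hsymm, sub_self]

theorem inner_sub_apply : ⟪x, x - P x⟫ = (‖x - P x‖ : 𝕜) ^ 2 := by
  have h := inner_add_left (𝕜 := 𝕜) (P x) (x - P x) (x - P x)
  rw [add_sub_cancel, hP.inner_apply_sub_apply_eq_zero, zero_add] at h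
  rw [h, inner_self_eq_norm_sq_to_K]

theorem norm_sub_apply_sq_add_norm_apply_sq : ‖x - P x‖ ^ 2 + ‖P x‖ ^ 2 = ‖x‖ ^ 2 := by
  have h := norm_add_sq_eq_norm_sq_add_norm_sq_of_inner_eq_zero _ _
    (hP.inner_apply_sub_apply_eq_zero x)
  rw [add_sub_cancel] at h
  linarith

theorem norm_sq_smul_sub_apply_eq (hx : ‖x‖ = 1) :
    ‖(‖x - P x‖ : 𝕜) ^ 2 • x - (x - P x)‖ = ‖x - P x‖ * ‖P x‖ := by
  have hsq := norm_inner_smul_sub_sq (𝕜 := 𝕜) hx (x - P x)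
  have hpyth := hP.norm_sub_apply_sq_add_norm_apply_sq x
  rw [hP.inner_sub_apply, norm_pow, RCLike.norm_ofReal, abs_norm] at hsq
  rw [hx, one_pow] at hpyth
  rw [← sq_eq_sq₀ (norm_nonneg _) (by positivity), hsq]
  linear_combination (-‖x - P x‖ ^ 2) * hpyth

end IsStarProjection

end InnerProductSpace

section SelfAdjoint

variable {H : Type*} [NormedAddCommGroup H] [InnerProductSpace ℂ H] [CompleteSpace H]
  {A : H →L[ℂ] H}

local notation "⟪" x ", " y "⟫" => inner ℂ x y

theorem IsSelfAdjoint.infDist_spectrum_mul_norm_le (hA : IsSelfAdjoint A) (r : ℝ) (x : H) :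
    infDist r (spectrum ℝ A) * ‖x‖ ≤ ‖A x - (r : ℂ) • x‖ := by
  rcases (infDist_nonneg : 0 ≤ infDist r (spectrum ℝ A)).eq_or_lt with hd | hd
  · rw [← hd, zero_mul]; positivity
  have hr : r ∉ spectrum ℝ A := fun h => hd.ne' (infDist_zero_of_mem h)
  have hne : ∀ t ∈ spectrum ℝ A, t - r ≠ 0 := fun t ht =>
    sub_ne_zero.2 (ne_of_mem_of_not_mem ht hr)
  set R := cfc (fun t : ℝ => (t - r)⁻¹) A
  have hinv : R * (A - algebraMap ℝ _ r) = 1 := by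
    have hcont : ContinuousOn (fun t : ℝ => (t - r)⁻¹) (spectrum ℝ A) :=
      (continuousOn_id.sub continuousOn_const).inv₀ hne
    rw [← cfc_id' ℝ A, ← cfc_const r A, ← cfc_sub _ _ A, ← cfc_mul _ _ A hcont, ← cfc_one ℝ A]
    exact cfc_congr fun t ht => inv_mul_cancel₀ (hne t ht)
  have hnorm : ‖R‖ ≤ (infDist r (spectrum ℝ A))⁻¹ := by
    refine norm_cfc_le (by positivity) fun t ht => ?_
    rw [norm_inv, ← dist_eq_norm, dist_comm]
    exact inv_anti₀ hd (infDist_le_dist_of_mem ht)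
  have hx : R (A x - (r : ℂ) • x) = x := by
    simpa [Algebra.algebraMap_eq_smul_one] using congr($hinv x)
  calc infDist r (spectrum ℝ A) * ‖x‖
      ≤ infDist r (spectrum ℝ A) * (‖R‖ * ‖A x - (r : ℂ) • x‖) := by
        grw [← le_opNorm, hx]
    _ ≤ ‖A x - (r : ℂ) • x‖ := by
        grw [hnorm, ← mul_assoc, mul_inv_cancel₀ hd.ne', one_mul]

theorem IsSelfAdjoint.apply_sub_re_smul_eq (hA : IsSelfAdjoint A) {φ ψ : H} {s t : ℝ} {μ : ℂ}
    (hφ : ‖φ‖ = 1) (hψ : ⟪φ, ψ⟫ = t) (heig : A φ + (s * I) • ψ = μ • φ) :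
    A φ - (μ.re : ℂ) • φ = (s * I) • ((t : ℂ) • φ - ψ) := by
  have hμ : ⟪φ, A φ⟫ + s * I * t = μ := by
    simpa [inner_add_right, inner_smul_right, hψ, inner_self_eq_norm_sq_to_K, hφ] using
      congr(⟪φ, $heig⟫)
  have hre : (⟪φ, A φ⟫.re : ℂ) = ⟪φ, A φ⟫ := hA.isSymmetric.coe_re_inner_self_apply φ
  have hμ_sub_re : μ - μ.re = s * I * t := by
    rw [← hμ, ← hre]; apply Complex.ext <;> simp
  rw [smul_sub, smul_smul, ← hμ_sub_re]
  linear_combination (norm := module) heig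

end SelfAdjoint

/-- Remark 3.2, second estimate in (3.3): for an eigenpair `(μ, φ)` of the
complementary shifted operator `Ã_s = A + i s (1 - P)` with `‖φ‖ = 1`,
`dist(Re μ, Spec_ℝ(A)) ≤ s δ τ` where `δ = ‖φ - P φ‖`, `τ = ‖P φ‖`. -/
theorem stmt16 {H : Type*} [NormedAddCommGroup H] [InnerProductSpace ℂ H] [CompleteSpace H]
    (A P : H →L[ℂ] H) (hA : IsSelfAdjoint A) (hP : IsSelfAdjoint P) (hP2 : P ∘L P = P)
    (s : ℝ) (hs : 0 < s) (μ : ℂ) (φ : H) (hφ : ‖φ‖ = 1)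
    (heig : A φ + (s * Complex.I) • (φ - P φ) = μ • φ) :
    Metric.infDist μ.re (spectrum ℝ A) ≤ s * ‖φ - P φ‖ * ‖P φ‖ := by
  have hPproj : IsStarProjection P := ⟨hP2, hP⟩
  have hψ : inner ℂ φ (φ - P φ) = ((‖φ - P φ‖ ^ 2 : ℝ) : ℂ) := by
    push_cast; exact hPproj.inner_sub_apply φ
  have hshift := hA.apply_sub_re_smul_eq hφ hψ heig
  calc Metric.infDist μ.re (spectrum ℝ A)
      = Metric.infDist μ.re (spectrum ℝ A) * ‖φ‖ := by rw [hφ, mul_one]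
    _ ≤ ‖A φ - (μ.re : ℂ) • φ‖ := hA.infDist_spectrum_mul_norm_le μ.re φ
    _ = s * ‖φ - P φ‖ * ‖P φ‖ := by
      rw [hshift, norm_smul, ofReal_pow, ← RCLike.ofReal_eq_complex_ofReal,
        hPproj.norm_sq_smul_sub_apply_eq φ hφ, norm_mul, norm_I, RCLike.norm_ofReal, abs_of_pos hs,
        mul_one, mul_assoc]
end
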